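/- arXiv:1609.00580 — 5 statements merged into one kernel-verified Lean document; each statement's English description precedes it below -/
import Mathlib

section
/- Let d ≥ 1, k ≥ 1, η_1, …, η_k > 0 and T_1, …, T_k > 0. Set η = ∑_{j=1}^k η_j and T_∞ = (1/η) ∑_{j=1}^k η_j T_j. Define g : ℝ^d → ℝ by g(v) = (1 + η)^{−1} ( m_{T_∞}(v) + ∑_{j=1}^k η_j m_{T_j}(v) ). Then: (i) g is a probability density on ℝ^d; (ii) its temperature T_g := (1/d) ∫_{ℝ^d} |v|² g(v) dv equals T_∞; and (iii) g satisfies the self-consistent steady-state equation [ m_{T_g}(v) − g(v) ] + ∑_{j=1}^k η_j [ m_{T_j}(v) − g(v) ] = 0 for every v ∈ ℝ^d. -/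
open MeasureTheory

/-- The centered Maxwellian (Gaussian) probability density at temperature `T` on `ℝᵈ`. -/
noncomputable def maxwellian (d : ℕ) (T : ℝ) (v : EuclideanSpace ℝ (Fin d)) : ℝ :=
  (2 * Real.pi * T) ^ (-(d : ℝ) / 2) * Real.exp (-‖v‖ ^ 2 / (2 * T))

open Real Set Module

/-!
In polar coordinates both `∫ e^{-b‖x‖²}` and `∫ ‖x‖² e^{-b‖x‖²}` over an `n`-dimensional space
become Gamma values, and `Γ(n/2 + 1) = (n/2) Γ(n/2)` shows that their ratio is `n / (2b)`.
Hence `m_T` has mass `1` and second moment `d T`, so `g` has mass `1` and temperature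
`(T∞ + ∑ⱼ ηⱼ Tⱼ) / (1 + η) = T∞`. Once `T_g = T∞`, the steady-state equation is
`m_{T∞} + ∑ⱼ ηⱼ m_{Tⱼ} = (1 + η) g`, which is the definition of `g`.
-/

theorem integral_rpow_add_two_mul_exp_neg_mul_sq {b s : ℝ} (hb : 0 < b) (hs : -1 < s) :
    ∫ y in Ioi (0 : ℝ), y ^ (s + 2) * exp (-b * y ^ 2) =
      (s + 1) / (2 * b) * ∫ y in Ioi (0 : ℝ), y ^ s * exp (-b * y ^ 2) := by
  simp_rw [← rpow_two]
  rw [integral_rpow_mul_exp_neg_mul_rpow two_pos (by linarith) hb,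
    integral_rpow_mul_exp_neg_mul_rpow two_pos hs hb,
    show (s + 2 + 1) / 2 = (s + 1) / 2 + 1 by ring,
    Gamma_add_one (by linarith : 0 < (s + 1) / 2).ne',
    show -(s + 2 + 1) / 2 = -(s + 1) / 2 - 1 by ring, rpow_sub_one hb.ne']
  field_simp

theorem integral_sq_norm_mul_exp_neg_mul_sq_norm {E : Type*} [NormedAddCommGroup E]
    [NormedSpace ℝ E] [FiniteDimensional ℝ E] [Nontrivial E] [MeasurableSpace E] [BorelSpace E]
    (μ : Measure E) [μ.IsAddHaarMeasure] {b : ℝ} (hb : 0 < b) :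
    ∫ x, ‖x‖ ^ 2 * exp (-b * ‖x‖ ^ 2) ∂μ =
      finrank ℝ E / (2 * b) * ∫ x, exp (-b * ‖x‖ ^ 2) ∂μ := by
  have hn : ((finrank ℝ E - 1 : ℕ) : ℝ) + 1 = finrank ℝ E := by
    rw [Nat.cast_sub finrank_pos, Nat.cast_one, sub_add_cancel]
  have hradial := integral_rpow_add_two_mul_exp_neg_mul_sq hb
    (neg_one_lt_zero.trans_le (Nat.cast_nonneg (finrank ℝ E - 1)))
  rw [show ((finrank ℝ E - 1 : ℕ) : ℝ) + 2 = ((finrank ℝ E - 1 + 2 : ℕ) : ℝ) by push_cast; ring,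
    hn] at hradial
  simp only [rpow_natCast, pow_add, mul_assoc] at hradial
  rw [integral_fun_norm_addHaar μ (fun y => y ^ 2 * exp (-b * y ^ 2)),
    integral_fun_norm_addHaar μ (fun y => exp (-b * y ^ 2))]
  simp only [smul_eq_mul, nsmul_eq_mul, hradial]
  ring

section Maxwellian

variable {d : ℕ} {T : ℝ}

theorem maxwellian_eq_const_mul_exp (v : EuclideanSpace ℝ (Fin d)) :
    maxwellian d T v = (2 * π * T) ^ (-(d : ℝ) / 2) * exp (-(2 * T)⁻¹ * ‖v‖ ^ 2) := by
  rw [maxwellian]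
  congr 2
  ring

theorem integral_maxwellian (hT : 0 < T) : ∫ v, maxwellian d T v = 1 := by
  simp_rw [maxwellian_eq_const_mul_exp]
  rw [integral_const_mul, GaussianFourier.integral_rexp_neg_mul_sq_norm (by positivity),
    finrank_euclideanSpace_fin, div_inv_eq_mul, show π * (2 * T) = 2 * π * T by ring, neg_div,
    rpow_neg (by positivity), inv_mul_cancel₀ (by positivity)]

theorem integral_sq_norm_mul_maxwellian [NeZero d] (hT : 0 < T) :
    ∫ v, ‖v‖ ^ 2 * maxwellian d T v = d * T := by
  have hb : 0 < (2 * T)⁻¹ := by positivity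
  calc ∫ v, ‖v‖ ^ 2 * maxwellian d T v
      = (2 * π * T) ^ (-(d : ℝ) / 2) *
          ∫ v : EuclideanSpace ℝ (Fin d), ‖v‖ ^ 2 * exp (-(2 * T)⁻¹ * ‖v‖ ^ 2) := by
        simp_rw [maxwellian_eq_const_mul_exp, mul_left_comm (‖_‖ ^ 2)]
        exact integral_const_mul _ _
    _ = d / (2 * (2 * T)⁻¹) * ∫ v, maxwellian d T v := by
        rw [integral_sq_norm_mul_exp_neg_mul_sq_norm volume hb, finrank_euclideanSpace_fin]
        simp_rw [maxwellian_eq_const_mul_exp, integral_const_mul]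
        ring
    _ = d * T := by
      rw [integral_maxwellian hT]
      field_simp

theorem integrable_maxwellian (hT : 0 < T) : Integrable (maxwellian d T) :=
  Integrable.of_integral_ne_zero (by rw [integral_maxwellian hT]; exact one_ne_zero)

theorem integrable_sq_norm_mul_maxwellian [NeZero d] (hT : 0 < T) :
    Integrable (fun v => ‖v‖ ^ 2 * maxwellian d T v) :=
  Integrable.of_integral_ne_zero <| by
    rw [integral_sq_norm_mul_maxwellian hT]
    exact mul_ne_zero (NeZero.ne _) hT.ne'

variable {ι : Type*} (s : Finset ι) (w : ι → ℝ) {T₀ : ℝ} {T : ι → ℝ}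

theorem integral_maxwellian_add_sum (hT₀ : 0 < T₀) (hT : ∀ i ∈ s, 0 < T i) :
    ∫ v, (maxwellian d T₀ v + ∑ i ∈ s, w i * maxwellian d (T i) v) = 1 + ∑ i ∈ s, w i := by
  have hint : ∀ i ∈ s, Integrable fun v => w i * maxwellian d (T i) v :=
    fun i hi => (integrable_maxwellian (hT i hi)).const_mul (w i)
  rw [integral_add (integrable_maxwellian hT₀) (integrable_finsetSum s hint),
    integral_finsetSum s hint, integral_maxwellian hT₀]
  congr 1
  refine Finset.sum_congr rfl fun i hi => ?_
  rw [integral_const_mul, integral_maxwellian (hT i hi), mul_one]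

theorem integral_sq_norm_mul_maxwellian_add_sum [NeZero d] (hT₀ : 0 < T₀)
    (hT : ∀ i ∈ s, 0 < T i) :
    ∫ v, ‖v‖ ^ 2 * (maxwellian d T₀ v + ∑ i ∈ s, w i * maxwellian d (T i) v) =
      d * (T₀ + ∑ i ∈ s, w i * T i) := by
  have hint : ∀ i ∈ s, Integrable fun v => w i * (‖v‖ ^ 2 * maxwellian d (T i) v) :=
    fun i hi => (integrable_sq_norm_mul_maxwellian (hT i hi)).const_mul (w i)
  simp_rw [mul_add, Finset.mul_sum, mul_left_comm (‖_‖ ^ 2) (w _)]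
  rw [integral_add (integrable_sq_norm_mul_maxwellian hT₀) (integrable_finsetSum s hint),
    integral_finsetSum s hint, integral_sq_norm_mul_maxwellian hT₀]
  congr 1
  refine Finset.sum_congr rfl fun i hi => ?_
  rw [integral_const_mul, integral_sq_norm_mul_maxwellian (hT i hi)]
  ring

end Maxwellian

/-- Lemma 2.1: the unique spatially homogeneous steady state of the thermostatted
BGK equation (with `α = 1`) is the explicit mixture of Maxwellians
`g = (1 + η)⁻¹ (m_{T∞} + ∑ⱼ ηⱼ m_{Tⱼ})`; it is a probability density, its
temperature is `T∞`, and it satisfies the self-consistent steady state equation. -/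
theorem bgk_homogeneous_steady_state
    (d : ℕ) (hd : 1 ≤ d)
    (k : ℕ) (hk : 1 ≤ k)
    (η : Fin k → ℝ) (hη : ∀ j, 0 < η j)
    (Tres : Fin k → ℝ) (hTres : ∀ j, 0 < Tres j)
    (ηtot : ℝ) (hηtot : ηtot = ∑ j, η j)
    (Tinf : ℝ) (hTinf : Tinf = (1 / ηtot) * ∑ j, η j * Tres j)
    (g : EuclideanSpace ℝ (Fin d) → ℝ)
    (hg : ∀ v, g v = (1 + ηtot)⁻¹ *
      (maxwellian d Tinf v + ∑ j, η j * maxwellian d (Tres j) v))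
    (Tg : ℝ) (hTg : Tg = (1 / (d : ℝ)) * ∫ v : EuclideanSpace ℝ (Fin d), ‖v‖ ^ 2 * g v) :
    (∫ v : EuclideanSpace ℝ (Fin d), g v) = 1 ∧
    Tg = Tinf ∧
    (∀ v : EuclideanSpace ℝ (Fin d),
      (maxwellian d Tg v - g v) + ∑ j, η j * (maxwellian d (Tres j) v - g v) = 0) := by
  have : NeZero d := ⟨by omega⟩
  have hne : (Finset.univ : Finset (Fin k)).Nonempty := ⟨⟨0, hk⟩, Finset.mem_univ _⟩
  have hηtot_pos : 0 < ηtot := hηtot ▸ Finset.sum_pos (fun j _ => hη j) hne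
  have hTinf_pos : 0 < Tinf :=
    hTinf ▸ mul_pos (by positivity) (Finset.sum_pos (fun j _ => mul_pos (hη j) (hTres j)) hne)
  have hmoment : ∑ j, η j * Tres j = ηtot * Tinf := by
    rw [hTinf]
    field_simp
  have hmass : ∫ v, g v = 1 := by
    simp_rw [hg]
    rw [integral_const_mul, integral_maxwellian_add_sum _ _ hTinf_pos fun j _ => hTres j, ← hηtot]
    field_simp
  have htemp : Tg = Tinf := by
    simp_rw [hTg, hg, mul_left_comm (‖_‖ ^ 2)]
    rw [integral_const_mul,
      integral_sq_norm_mul_maxwellian_add_sum _ _ hTinf_pos fun j _ => hTres j, hmoment]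
    field_simp
  refine ⟨hmass, htemp, fun v => ?_⟩
  simp_rw [htemp, mul_sub]
  rw [Finset.sum_sub_distrib, ← Finset.sum_mul, ← hηtot, hg v]
  field_simp
  ring
end

section
/- Let d ≥ 1, let T_1 < T_2 be positive reals, η_1, η_2 > 0, η = η_1 + η_2 and T_∞ = (η_1 T_1 + η_2 T_2)/η. Define g : ℝ^d → ℝ by g(v) = ∫_{T_1}^{T_2} w(T) m_T(v) dT. Then g is twice continuously differentiable and for every v ∈ ℝ^d, T_∞ Δg(v) + div_v(v g(v)) + η_1 m_{T_1}(v) + η_2 m_{T_2}(v) − η g(v) = 0, where Δ is the Laplacian in v and div_v(v g(v)) = v·∇g(v) + d g(v). -/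
open MeasureTheory

/-- Partial derivative of `f` in the `i`-th coordinate direction at `v`. -/
noncomputable def coordDeriv (d : ℕ) (f : EuclideanSpace ℝ (Fin d) → ℝ) (i : Fin d)
    (v : EuclideanSpace ℝ (Fin d)) : ℝ :=
  deriv (fun t : ℝ => f (v + t • EuclideanSpace.single i (1 : ℝ))) 0

/-- The Laplacian of `f` at `v`: the sum of the second derivatives along the
coordinate directions. -/
noncomputable def lap (d : ℕ) (f : EuclideanSpace ℝ (Fin d) → ℝ)
    (v : EuclideanSpace ℝ (Fin d)) : ℝ :=
  ∑ i : Fin d, iteratedDeriv 2 (fun t : ℝ => f (v + t • EuclideanSpace.single i (1 : ℝ))) 0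

/-- The temperature density `w` of Theorem 2.2 (steady state formula). -/
noncomputable def wdens (η₁ η₂ T₁ T₂ : ℝ) (T : ℝ) : ℝ :=
  if T < (η₁ * T₁ + η₂ * T₂) / (η₁ + η₂) then
    (η₁ / 2) * ((η₁ * T₁ + η₂ * T₂) / (η₁ + η₂) - T₁) ^ (-(η₁ + η₂) / 2) *
      ((η₁ * T₁ + η₂ * T₂) / (η₁ + η₂) - T) ^ ((η₁ + η₂) / 2 - 1)
  else if T = (η₁ * T₁ + η₂ * T₂) / (η₁ + η₂) then 0
  else
    (η₂ / 2) * (T₂ - (η₁ * T₁ + η₂ * T₂) / (η₁ + η₂)) ^ (-(η₁ + η₂) / 2) *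
      (T - (η₁ * T₁ + η₂ * T₂) / (η₁ + η₂)) ^ ((η₁ + η₂) / 2 - 1)

/-! Write `g v = G (‖v‖²)` with `G s = ∫ w(T) (2πT)^(-d/2) e^(-s/(2T)) dT`; differentiating under
the integral sign and the radial formulas for `Δ` and `v · ∇` turn the equation into an identity
in `s`. Since `∂_T m_T = Δm_T / 2`, one has `T∞ Δm_T + div(v m_T) = 2 (T∞ - T) ∂_T m_T`, so with the
flux `φ T = 2 (T∞ - T) w T` the left-hand side is
`∫ (φ ∂_T m_T - η w m_T) dT + η₁ m_{T₁} + η₂ m_{T₂}`. On each side of `T∞`, `φ` is a multiple of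
`|T∞ - T|^(η/2)`: it is continuous, `φ' = -η w` off `T∞`, `φ T₁ = η₁` and `φ T₂ = -η₂`. Hence the
integrand is `∂_T (φ m_T)` and the integral equals `-η₁ m_{T₁} - η₂ m_{T₂}`. -/

open Real Set

noncomputable section

namespace FokkerPlanck

def gaussianProfile (d : ℕ) (T s : ℝ) : ℝ :=
  (2 * π * T) ^ (-(d : ℝ) / 2) * exp (-s / (2 * T))

section GaussianProfile

variable {d : ℕ} {T : ℝ}

lemma maxwellian_eq_gaussianProfile (v : EuclideanSpace ℝ (Fin d)) :
    maxwellian d T v = gaussianProfile d T (‖v‖ ^ 2) :=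
  rfl

lemma gaussianProfile_pos (hT : 0 < T) (s : ℝ) : 0 < gaussianProfile d T s := by
  unfold gaussianProfile; positivity

lemma hasDerivAt_gaussianProfile (T s : ℝ) :
    HasDerivAt (gaussianProfile d T) (-(2 * T)⁻¹ * gaussianProfile d T s) s :=
  ((((hasDerivAt_neg s).div_const (2 * T)).exp).const_mul
    ((2 * π * T) ^ (-(d : ℝ) / 2))).congr_deriv (by rw [gaussianProfile]; ring)

lemma hasDerivAt_gaussianProfile_temp (hT : 0 < T) (s : ℝ) :
    HasDerivAt (fun T => gaussianProfile d T s)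
      ((s / (2 * T ^ 2) - d / (2 * T)) * gaussianProfile d T s) T := by
  have hpow : HasDerivAt (fun T : ℝ => (2 * π * T) ^ (-(d : ℝ) / 2))
      (2 * π * (-(d : ℝ) / 2) * (2 * π * T) ^ (-(d : ℝ) / 2 - 1)) T := by
    simpa using ((hasDerivAt_id T).const_mul (2 * π)).rpow_const (Or.inl (by positivity))
  have hexp := ((hasDerivAt_const T (-s)).div ((hasDerivAt_id' T).const_mul 2)
    (by positivity)).exp
  simp only [Pi.div_apply] at hexp
  refine (hpow.mul hexp).congr_deriv ?_
  rw [gaussianProfile, rpow_sub (by positivity), rpow_one]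
  field_simp
  ring

lemma continuousOn_gaussianProfile_temp (s : ℝ) :
    ContinuousOn (fun T => gaussianProfile d T s) (Ioi 0) :=
  fun _ hT => (hasDerivAt_gaussianProfile_temp hT s).continuousAt.continuousWithinAt

lemma gaussianProfile_le {a r s : ℝ} (ha : 0 < a) (haT : a ≤ T) (hr : 0 ≤ r) (hs : -r ≤ s) :
    gaussianProfile d T s ≤ gaussianProfile d a (-r) := by
  unfold gaussianProfile
  gcongr ?_ * exp ?_
  · exact rpow_le_rpow_of_nonpos (by positivity) (by gcongr)
      (by linarith [d.cast_nonneg (α := ℝ)])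
  · rw [neg_neg]
    calc -s / (2 * T) ≤ r / (2 * T) := div_le_div_of_nonneg_right (by linarith) (by linarith)
      _ ≤ r / (2 * a) := by gcongr

end GaussianProfile

/-- `∂ₛ` multiplies `gaussianProfile d T s` by `-(2T)⁻¹`, so this is the `k`-th derivative of
`mixtureProfile d w a b 0`. -/
def mixtureProfile (d : ℕ) (w : ℝ → ℝ) (a b : ℝ) (k : ℕ) (s : ℝ) : ℝ :=
  ∫ T in a..b, w T * (-(2 * T)⁻¹) ^ k * gaussianProfile d T s

section MixtureProfile

variable {d : ℕ} {w : ℝ → ℝ} {a b : ℝ}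

lemma intervalIntegrable_mul_gaussianProfile (hw : IntervalIntegrable w volume a b)
    (ha : 0 < a) (hab : a ≤ b) (k : ℕ) (s : ℝ) :
    IntervalIntegrable (fun T => w T * (-(2 * T)⁻¹) ^ k * gaussianProfile d T s) volume a b := by
  have hsub : uIcc a b ⊆ Ioi 0 := by
    rw [uIcc_of_le hab]; exact fun T hT => ha.trans_le hT.1
  have hinv : ContinuousOn (fun T : ℝ => (2 * T)⁻¹) (Ioi 0) :=
    (continuousOn_const.mul continuousOn_id).inv₀ fun T hT => (mul_pos two_pos hT).ne'
  have hcont : ContinuousOn (fun T => (-(2 * T)⁻¹) ^ k * gaussianProfile d T s) (uIcc a b) :=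
    ((hinv.neg.pow k).mul (continuousOn_gaussianProfile_temp s)).mono hsub
  simpa only [mul_assoc] using hw.mul_continuousOn hcont

lemma hasDerivAt_mixtureProfile (hw : IntervalIntegrable w volume a b) (ha : 0 < a)
    (hab : a ≤ b) (k : ℕ) (s : ℝ) :
    HasDerivAt (mixtureProfile d w a b k) (mixtureProfile d w a b (k + 1) s) s := by
  have hint := intervalIntegrable_mul_gaussianProfile (d := d) hw ha hab
  refine (intervalIntegral.hasDerivAt_integral_of_dominated_loc_of_deriv_le
    (F := fun x T => w T * (-(2 * T)⁻¹) ^ k * gaussianProfile d T x)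
    (F' := fun x T => w T * (-(2 * T)⁻¹) ^ (k + 1) * gaussianProfile d T x)
    (bound := fun T => |w T| * ((2 * a)⁻¹ ^ (k + 1) * gaussianProfile d a (-(|s| + 1))))
    (Metric.ball_mem_nhds s one_pos) (.of_forall fun x => (hint k x).def'.1)
    (hint k s) (hint (k + 1) s).def'.1 (.of_forall fun T hT x hx => ?_)
    (hw.abs.mul_const _) (.of_forall fun T hT x _ => ?_)).2
  all_goals rw [uIoc_of_le hab] at hT; have hTpos : 0 < T := ha.trans hT.1
  · have hx : -(|s| + 1) ≤ x := by
      have := abs_sub_lt_iff.mp (mem_ball_iff_norm.mp hx); cases abs_cases s <;> linarith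
    rw [norm_mul, norm_mul, norm_pow, norm_neg, norm_inv, Real.norm_eq_abs, Real.norm_eq_abs,
      Real.norm_eq_abs, abs_of_pos (gaussianProfile_pos hTpos x),
      abs_of_pos (by linarith : (0 : ℝ) < 2 * T), mul_assoc]
    gcongr
    · exact (gaussianProfile_pos hTpos x).le
    · exact hT.1.le
    · exact gaussianProfile_le ha hT.1.le (by positivity) hx
  · exact (hasDerivAt_gaussianProfile T x).const_mul (w T * (-(2 * T)⁻¹) ^ k) |>.congr_deriv
      (by ring)

end MixtureProfile

section Radial

variable {d : ℕ} {G G' G'' : ℝ → ℝ}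

lemma norm_add_smul_single_sq (v : EuclideanSpace ℝ (Fin d)) (i : Fin d) (t : ℝ) :
    ‖v + t • EuclideanSpace.single i (1 : ℝ)‖ ^ 2 = ‖v‖ ^ 2 + 2 * v i * t + t ^ 2 := by
  rw [norm_add_sq_real, real_inner_smul_right, EuclideanSpace.inner_single_right, norm_smul,
    PiLp.norm_single, Real.norm_eq_abs, mul_pow, sq_abs]
  simp only [conj_trivial, one_mul, norm_one]
  ring

lemma sum_sq_eq_norm_sq (v : EuclideanSpace ℝ (Fin d)) : ∑ i, v i ^ 2 = ‖v‖ ^ 2 := by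
  simp [EuclideanSpace.norm_eq, sq_abs, Real.sq_sqrt (Finset.sum_nonneg fun i _ => sq_nonneg (v i))]

lemma hasDerivAt_comp_norm_add_smul_single_sq (hG : ∀ s, HasDerivAt G (G' s) s)
    (v : EuclideanSpace ℝ (Fin d)) (i : Fin d) (t : ℝ) :
    HasDerivAt (fun t : ℝ => G (‖v + t • EuclideanSpace.single i (1 : ℝ)‖ ^ 2))
      (G' (‖v‖ ^ 2 + 2 * v i * t + t ^ 2) * (2 * v i + 2 * t)) t := by
  simp only [norm_add_smul_single_sq]
  have hpoly : HasDerivAt (fun t => ‖v‖ ^ 2 + 2 * v i * t + t ^ 2) (2 * v i + 2 * t) t :=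
    (((hasDerivAt_id' t).const_mul (2 * v i)).const_add (‖v‖ ^ 2) |>.add
      (hasDerivAt_pow 2 t)).congr_deriv (by simp)
  exact (hG _).comp t hpoly

lemma coordDeriv_comp_norm_sq (hG : ∀ s, HasDerivAt G (G' s) s)
    (v : EuclideanSpace ℝ (Fin d)) (i : Fin d) :
    coordDeriv d (fun v => G (‖v‖ ^ 2)) i v = 2 * v i * G' (‖v‖ ^ 2) := by
  rw [coordDeriv, (hasDerivAt_comp_norm_add_smul_single_sq hG v i 0).deriv]
  ring_nf

lemma iteratedDeriv_two_comp_norm_add_smul_single_sq (hG : ∀ s, HasDerivAt G (G' s) s)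
    (hG' : ∀ s, HasDerivAt G' (G'' s) s) (v : EuclideanSpace ℝ (Fin d)) (i : Fin d) :
    iteratedDeriv 2 (fun t : ℝ => G (‖v + t • EuclideanSpace.single i (1 : ℝ)‖ ^ 2)) 0
      = 4 * v i ^ 2 * G'' (‖v‖ ^ 2) + 2 * G' (‖v‖ ^ 2) := by
  have hderiv : deriv (fun t : ℝ => G (‖v + t • EuclideanSpace.single i (1 : ℝ)‖ ^ 2))
      = fun t : ℝ => G' (‖v + t • EuclideanSpace.single i (1 : ℝ)‖ ^ 2) * (2 * v i + 2 * t) := by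
    ext t
    rw [(hasDerivAt_comp_norm_add_smul_single_sq hG v i t).deriv, norm_add_smul_single_sq]
  have hline := (hasDerivAt_comp_norm_add_smul_single_sq hG' v i 0).mul
    (((hasDerivAt_id' (0 : ℝ)).const_mul 2).const_add (2 * v i))
  rw [iteratedDeriv_succ, iteratedDeriv_one, hderiv]
  refine hline.deriv.trans ?_
  simp only [zero_smul, add_zero, mul_zero, zero_pow two_ne_zero]
  ring

lemma lap_comp_norm_sq (hG : ∀ s, HasDerivAt G (G' s) s) (hG' : ∀ s, HasDerivAt G' (G'' s) s)
    (v : EuclideanSpace ℝ (Fin d)) :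
    lap d (fun v => G (‖v‖ ^ 2)) v = 4 * ‖v‖ ^ 2 * G'' (‖v‖ ^ 2) + 2 * d * G' (‖v‖ ^ 2) := by
  simp only [lap, iteratedDeriv_two_comp_norm_add_smul_single_sq hG hG']
  generalize G'' (‖v‖ ^ 2) = c₂, G' (‖v‖ ^ 2) = c₁
  rw [Finset.sum_add_distrib, ← Finset.sum_mul, ← Finset.mul_sum, sum_sq_eq_norm_sq]
  simp only [Finset.sum_const, Finset.card_univ, Fintype.card_fin, nsmul_eq_mul]
  ring

lemma sum_mul_coordDeriv_comp_norm_sq (hG : ∀ s, HasDerivAt G (G' s) s)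
    (v : EuclideanSpace ℝ (Fin d)) :
    ∑ i, v i * coordDeriv d (fun v => G (‖v‖ ^ 2)) i v = 2 * ‖v‖ ^ 2 * G' (‖v‖ ^ 2) := by
  simp only [coordDeriv_comp_norm_sq hG]
  generalize G' (‖v‖ ^ 2) = c
  rw [← sum_sq_eq_norm_sq, Finset.mul_sum, Finset.sum_mul]
  exact Finset.sum_congr rfl fun i _ => by ring

lemma contDiff_two_comp_norm_sq (hG : ∀ s, HasDerivAt G (G' s) s)
    (hG' : ∀ s, HasDerivAt G' (G'' s) s) (hG'' : Continuous G'') :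
    ContDiff ℝ 2 (fun v : EuclideanSpace ℝ (Fin d) => G (‖v‖ ^ 2)) := by
  have hderiv : deriv G = G' := funext fun s => (hG s).deriv
  have hderiv' : deriv G' = G'' := funext fun s => (hG' s).deriv
  have hG2 : ContDiff ℝ 2 G := by
    rw [show (2 : WithTop ℕ∞) = 1 + 1 from rfl, contDiff_succ_iff_deriv, hderiv,
      contDiff_one_iff_deriv, hderiv']
    exact ⟨fun s => (hG s).differentiableAt, by simp, fun s => (hG' s).differentiableAt, hG''⟩
  exact hG2.comp (contDiff_id.norm_sq ℝ)

end Radial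

def meanTemp (η₁ η₂ T₁ T₂ : ℝ) : ℝ := (η₁ * T₁ + η₂ * T₂) / (η₁ + η₂)

def tempFlux (η₁ η₂ T₁ T₂ T : ℝ) : ℝ := 2 * (meanTemp η₁ η₂ T₁ T₂ - T) * wdens η₁ η₂ T₁ T₂ T

section TemperatureWeight

variable {η₁ η₂ T₁ T₂ T : ℝ}

lemma meanTemp_mem_Ioo (hη₁ : 0 < η₁) (hη₂ : 0 < η₂) (hT₁₂ : T₁ < T₂) :
    meanTemp η₁ η₂ T₁ T₂ ∈ Ioo T₁ T₂ := by
  constructor <;> unfold meanTemp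
  · rw [lt_div_iff₀ (by positivity)]; nlinarith
  · rw [div_lt_iff₀ (by positivity)]; nlinarith

lemma wdens_of_lt (h : T < meanTemp η₁ η₂ T₁ T₂) :
    wdens η₁ η₂ T₁ T₂ T = η₁ / 2 * (meanTemp η₁ η₂ T₁ T₂ - T₁) ^ (-(η₁ + η₂) / 2) *
      (meanTemp η₁ η₂ T₁ T₂ - T) ^ ((η₁ + η₂) / 2 - 1) := by
  unfold meanTemp at *
  rw [wdens, if_pos h]

lemma wdens_of_gt (h : meanTemp η₁ η₂ T₁ T₂ < T) :
    wdens η₁ η₂ T₁ T₂ T = η₂ / 2 * (T₂ - meanTemp η₁ η₂ T₁ T₂) ^ (-(η₁ + η₂) / 2) *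
      (T - meanTemp η₁ η₂ T₁ T₂) ^ ((η₁ + η₂) / 2 - 1) := by
  unfold meanTemp at *
  rw [wdens, if_neg h.not_gt, if_neg h.ne']

lemma intervalIntegrable_wdens (hη₁ : 0 < η₁) (hη₂ : 0 < η₂) (hT₁₂ : T₁ < T₂) :
    IntervalIntegrable (wdens η₁ η₂ T₁ T₂) volume T₁ T₂ := by
  obtain ⟨h₁, h₂⟩ := meanTemp_mem_Ioo hη₁ hη₂ hT₁₂
  set Tm := meanTemp η₁ η₂ T₁ T₂
  have hp : -1 < (η₁ + η₂) / 2 - 1 := by linarith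
  have hrpow := intervalIntegral.intervalIntegrable_rpow' (a := 0) (b := Tm - T₁) hp
  have hrpow' := intervalIntegral.intervalIntegrable_rpow' (a := 0) (b := T₂ - Tm) hp
  refine IntervalIntegrable.trans (b := Tm) ?_ ?_
  · have hleft := (hrpow.comp_sub_left Tm).const_mul (η₁ / 2 * (Tm - T₁) ^ (-(η₁ + η₂) / 2))
    rw [sub_zero, sub_sub_cancel] at hleft
    refine hleft.symm.congr_uIoo fun T hT => ?_
    rw [uIoo_of_lt h₁] at hT
    simp only [wdens_of_lt hT.2, Tm]
  · have hright := (hrpow'.comp_sub_right Tm).const_mul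
      (η₂ / 2 * (T₂ - Tm) ^ (-(η₁ + η₂) / 2))
    rw [zero_add, sub_add_cancel] at hright
    refine hright.congr_uIoo fun T hT => ?_
    rw [uIoo_of_lt h₂] at hT
    simp only [wdens_of_gt hT.1, Tm]

lemma tempFlux_of_lt (h : T < meanTemp η₁ η₂ T₁ T₂) :
    tempFlux η₁ η₂ T₁ T₂ T = η₁ * (meanTemp η₁ η₂ T₁ T₂ - T₁) ^ (-(η₁ + η₂) / 2) *
      (meanTemp η₁ η₂ T₁ T₂ - T) ^ ((η₁ + η₂) / 2) := by
  have hne := (sub_pos.2 h).ne'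
  rw [tempFlux, wdens_of_lt h, rpow_sub_one hne]
  field_simp

lemma tempFlux_of_gt (h : meanTemp η₁ η₂ T₁ T₂ < T) :
    tempFlux η₁ η₂ T₁ T₂ T = -(η₂ * (T₂ - meanTemp η₁ η₂ T₁ T₂) ^ (-(η₁ + η₂) / 2) *
      (T - meanTemp η₁ η₂ T₁ T₂) ^ ((η₁ + η₂) / 2)) := by
  have hne := (sub_pos.2 h).ne'
  rw [tempFlux, wdens_of_gt h, rpow_sub_one hne]
  field_simp
  ring

lemma continuous_tempFlux (hη : 0 < η₁ + η₂) : Continuous (tempFlux η₁ η₂ T₁ T₂) := by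
  set Tm := meanTemp η₁ η₂ T₁ T₂
  have hη' : 0 < (η₁ + η₂) / 2 := by positivity
  have hflux : tempFlux η₁ η₂ T₁ T₂ = fun T => if T ≤ Tm
      then η₁ * (Tm - T₁) ^ (-(η₁ + η₂) / 2) * (Tm - T) ^ ((η₁ + η₂) / 2)
      else -(η₂ * (T₂ - Tm) ^ (-(η₁ + η₂) / 2) * (T - Tm) ^ ((η₁ + η₂) / 2)) := by
    ext T
    rcases lt_trichotomy T Tm with h | rfl | h
    · rw [if_pos h.le, tempFlux_of_lt h]
    · simp [tempFlux, Tm, zero_rpow hη'.ne']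
    · rw [if_neg h.not_ge, tempFlux_of_gt h]
  rw [hflux]
  refine Continuous.if_le ?_ ?_ continuous_id continuous_const fun T hT => ?_
  · exact continuous_const.mul
      ((continuous_const.sub continuous_id).rpow_const fun _ => Or.inr hη'.le)
  · exact (continuous_const.mul
      ((continuous_id.sub continuous_const).rpow_const fun _ => Or.inr hη'.le)).neg
  · simp [hT, zero_rpow hη'.ne']

lemma hasDerivAt_tempFlux (hT : T ≠ meanTemp η₁ η₂ T₁ T₂) :
    HasDerivAt (tempFlux η₁ η₂ T₁ T₂) (-(η₁ + η₂) * wdens η₁ η₂ T₁ T₂ T) T := by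
  set Tm := meanTemp η₁ η₂ T₁ T₂
  rcases hT.lt_or_gt with h | h
  · have hloc := (eventually_lt_nhds h).mono fun T' h' => tempFlux_of_lt h'
    have hd := (((hasDerivAt_id' T).const_sub Tm).rpow_const (p := (η₁ + η₂) / 2)
      (Or.inl (sub_pos.2 h).ne')).const_mul (η₁ * (Tm - T₁) ^ (-(η₁ + η₂) / 2))
    refine (hd.congr_of_eventuallyEq hloc).congr_deriv ?_
    rw [wdens_of_lt h]
    ring
  · have hloc := (eventually_gt_nhds h).mono fun T' h' => tempFlux_of_gt h'
    have hd := ((((hasDerivAt_id' T).sub_const Tm).rpow_const (p := (η₁ + η₂) / 2)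
      (Or.inl (sub_pos.2 h).ne')).const_mul (η₂ * (T₂ - Tm) ^ (-(η₁ + η₂) / 2))).neg
    refine (hd.congr_of_eventuallyEq hloc).congr_deriv ?_
    rw [wdens_of_gt h]
    ring

lemma tempFlux_left (h : T₁ < meanTemp η₁ η₂ T₁ T₂) : tempFlux η₁ η₂ T₁ T₂ T₁ = η₁ := by
  rw [tempFlux_of_lt h, mul_assoc, ← rpow_add (sub_pos.2 h), neg_div, neg_add_cancel, rpow_zero,
    mul_one]

lemma tempFlux_right (h : meanTemp η₁ η₂ T₁ T₂ < T₂) : tempFlux η₁ η₂ T₁ T₂ T₂ = -η₂ := by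
  rw [tempFlux_of_gt h, mul_assoc, ← rpow_add (sub_pos.2 h), neg_div, neg_add_cancel, rpow_zero,
    mul_one]

end TemperatureWeight

section SteadyState

variable {d : ℕ} {η₁ η₂ T₁ T₂ : ℝ}

lemma integral_tempFlux_mul_sub (hT₁ : 0 < T₁) (hT₁₂ : T₁ < T₂) (hη₁ : 0 < η₁) (hη₂ : 0 < η₂)
    (s : ℝ) :
    ∫ T in T₁..T₂, (tempFlux η₁ η₂ T₁ T₂ T *
        ((s / (2 * T ^ 2) - d / (2 * T)) * gaussianProfile d T s) -
      (η₁ + η₂) * wdens η₁ η₂ T₁ T₂ T * gaussianProfile d T s)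
      = -η₂ * gaussianProfile d T₂ s - η₁ * gaussianProfile d T₁ s := by
  obtain ⟨h₁, h₂⟩ := meanTemp_mem_Ioo hη₁ hη₂ hT₁₂
  have hpos : uIcc T₁ T₂ ⊆ Ioi 0 := by
    rw [uIcc_of_le hT₁₂.le]; exact fun T hT => hT₁.trans_le hT.1
  have hq := (continuousOn_gaussianProfile_temp (d := d) s).mono hpos
  have hflux := (continuous_tempFlux (T₁ := T₁) (T₂ := T₂) (by positivity : 0 < η₁ + η₂))
  have hT0 : ∀ T ∈ uIcc T₁ T₂, T ≠ 0 := fun T hT => (hpos hT).ne'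
  have hcoef : ContinuousOn (fun T : ℝ => s / (2 * T ^ 2) - d / (2 * T)) (uIcc T₁ T₂) :=
    (continuousOn_const.div (by fun_prop) fun T hT => by simp [hT0 T hT]).sub
      (continuousOn_const.div (by fun_prop) fun T hT => by simp [hT0 T hT])
  rw [MeasureTheory.integral_eq_of_hasDerivAt_off_countable_of_le
    (fun T => tempFlux η₁ η₂ T₁ T₂ T * gaussianProfile d T s) _ hT₁₂.le
    (countable_singleton (meanTemp η₁ η₂ T₁ T₂)), tempFlux_left h₁, tempFlux_right h₂]
  · rw [← uIcc_of_le hT₁₂.le]; exact hflux.continuousOn.mul hq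
  · intro T hT
    exact ((hasDerivAt_tempFlux hT.2).mul
      (hasDerivAt_gaussianProfile_temp (hT₁.trans hT.1.1) s)).congr_deriv (by ring)
  · exact (hflux.continuousOn.mul (hcoef.mul hq)).intervalIntegrable.sub
      (((intervalIntegrable_wdens hη₁ hη₂ hT₁₂).const_mul _).mul_continuousOn hq)

lemma tempFlux_integrand_eq {T : ℝ} (hT : T ≠ 0) (s : ℝ) :
    tempFlux η₁ η₂ T₁ T₂ T * ((s / (2 * T ^ 2) - d / (2 * T)) * gaussianProfile d T s) -
        (η₁ + η₂) * wdens η₁ η₂ T₁ T₂ T * gaussianProfile d T s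
      = meanTemp η₁ η₂ T₁ T₂ * 4 * s *
          (wdens η₁ η₂ T₁ T₂ T * (-(2 * T)⁻¹) ^ 2 * gaussianProfile d T s)
        + (meanTemp η₁ η₂ T₁ T₂ * 2 * d + 2 * s) *
          (wdens η₁ η₂ T₁ T₂ T * (-(2 * T)⁻¹) ^ 1 * gaussianProfile d T s)
        + (d - (η₁ + η₂)) * (wdens η₁ η₂ T₁ T₂ T * (-(2 * T)⁻¹) ^ 0 * gaussianProfile d T s) := by
  simp only [tempFlux]
  field_simp
  ring

lemma mixtureProfile_wdens_identity (hT₁ : 0 < T₁) (hT₁₂ : T₁ < T₂) (hη₁ : 0 < η₁)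
    (hη₂ : 0 < η₂) (s : ℝ) :
    let G := mixtureProfile d (wdens η₁ η₂ T₁ T₂) T₁ T₂
    meanTemp η₁ η₂ T₁ T₂ * (4 * s * G 2 s + 2 * d * G 1 s) + (2 * s * G 1 s + d * G 0 s) +
      η₁ * gaussianProfile d T₁ s + η₂ * gaussianProfile d T₂ s - (η₁ + η₂) * G 0 s = 0 := by
  intro G
  have hint := intervalIntegrable_mul_gaussianProfile (d := d)
    (intervalIntegrable_wdens hη₁ hη₂ hT₁₂) hT₁ hT₁₂.le
  have hsplit := integral_tempFlux_mul_sub (d := d) hT₁ hT₁₂ hη₁ hη₂ s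
  rw [intervalIntegral.integral_congr fun T hT => tempFlux_integrand_eq
      (hT₁.trans_le (uIcc_of_le hT₁₂.le ▸ hT).1).ne' s,
    intervalIntegral.integral_add
      ((hint 2 s).const_mul _ |>.add ((hint 1 s).const_mul _)) ((hint 0 s).const_mul _),
    intervalIntegral.integral_add ((hint 2 s).const_mul _) ((hint 1 s).const_mul _),
    intervalIntegral.integral_const_mul, intervalIntegral.integral_const_mul,
    intervalIntegral.integral_const_mul] at hsplit
  simp only [G, mixtureProfile] at hsplit ⊢
  linarith

end SteadyState

end FokkerPlanck

end

open FokkerPlanck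

theorem fokker_planck_steady_state_general
    (d : ℕ)
    (T₁ T₂ : ℝ) (hT₁ : 0 < T₁) (hT₁₂ : T₁ < T₂)
    (η₁ η₂ : ℝ) (hη₁ : 0 < η₁) (hη₂ : 0 < η₂)
    (ηtot : ℝ) (hηtot : ηtot = η₁ + η₂)
    (Tinf : ℝ) (hTinf : Tinf = (η₁ * T₁ + η₂ * T₂) / ηtot)
    (g : EuclideanSpace ℝ (Fin d) → ℝ)
    (hg : ∀ v, g v = ∫ T in T₁..T₂, wdens η₁ η₂ T₁ T₂ T * maxwellian d T v) :
    ContDiff ℝ 2 g ∧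
    (∀ v : EuclideanSpace ℝ (Fin d),
      Tinf * lap d g v + ((∑ i, v i * coordDeriv d g i v) + d * g v) +
        η₁ * maxwellian d T₁ v + η₂ * maxwellian d T₂ v - ηtot * g v = 0) := by
  subst hηtot
  obtain rfl : Tinf = meanTemp η₁ η₂ T₁ T₂ := hTinf
  set G := mixtureProfile d (wdens η₁ η₂ T₁ T₂) T₁ T₂
  have hG : ∀ k s, HasDerivAt (G k) (G (k + 1) s) s :=
    hasDerivAt_mixtureProfile (intervalIntegrable_wdens hη₁ hη₂ hT₁₂) hT₁ hT₁₂.le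
  obtain rfl : g = fun v => G 0 (‖v‖ ^ 2) := funext fun v => by
    simp only [hg, G, mixtureProfile, pow_zero, mul_one, maxwellian_eq_gaussianProfile]
  refine ⟨contDiff_two_comp_norm_sq (hG 0) (hG 1)
    (continuous_iff_continuousAt.2 fun s => (hG 2 s).continuousAt), fun v => ?_⟩
  rw [lap_comp_norm_sq (hG 0) (hG 1), sum_mul_coordDeriv_comp_norm_sq (hG 0),
    maxwellian_eq_gaussianProfile, maxwellian_eq_gaussianProfile]
  linear_combination mixtureProfile_wdens_identity hT₁ hT₁₂ hη₁ hη₂ (‖v‖ ^ 2)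

/-- Theorem 2.2 (steady state formula): `g(v) = ∫_{T₁}^{T₂} w(T) m_T(v) dT` is a
`C²` steady state of the spatially homogeneous thermostatted kinetic
Fokker–Planck equation: `T∞ Δg + div(v g) + η₁ m_{T₁} + η₂ m_{T₂} - η g = 0`. -/
theorem fokker_planck_steady_state
    (d : ℕ) (hd : 1 ≤ d)
    (T₁ T₂ : ℝ) (hT₁ : 0 < T₁) (hT₁₂ : T₁ < T₂)
    (η₁ η₂ : ℝ) (hη₁ : 0 < η₁) (hη₂ : 0 < η₂)
    (ηtot : ℝ) (hηtot : ηtot = η₁ + η₂)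
    (Tinf : ℝ) (hTinf : Tinf = (η₁ * T₁ + η₂ * T₂) / ηtot)
    (g : EuclideanSpace ℝ (Fin d) → ℝ)
    (hg : ∀ v, g v = ∫ T in T₁..T₂, wdens η₁ η₂ T₁ T₂ T * maxwellian d T v) :
    ContDiff ℝ 2 g ∧
    (∀ v : EuclideanSpace ℝ (Fin d),
      Tinf * lap d g v + ((∑ i, v i * coordDeriv d g i v) + d * g v) +
        η₁ * maxwellian d T₁ v + η₂ * maxwellian d T₂ v - ηtot * g v = 0) :=
  fokker_planck_steady_state_general d T₁ T₂ hT₁ hT₁₂ η₁ η₂ hη₁ hη₂ ηtot hηtot Tinf hTinf g hg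
end

section
/- Let (X, 𝓕_X), (Y, 𝓕_Y), (Z, 𝓕_Z) be measurable spaces. Let ν be a probability measure on Z, let μ_1, μ_2 be probability measures on Y, and let κ_1, κ_2 be Markov kernels from Y × Z to X. For j = 1, 2 define the probability measure ρ_j on X × Y × Z by ρ_j(C) = ∫_{Y×Z} κ_j(y,z)({x : (x,y,z) ∈ C}) dμ_j(y) dν(z) for C ∈ 𝓕_X ⊗ 𝓕_Y ⊗ 𝓕_Z. Suppose there is a constant 0 < c ≤ 1 such that for all y, y' ∈ Y, all z ∈ Z, and all A ∈ 𝓕_X, c · κ_1(y,z)(A) ≤ κ_2(y',z)(A) ≤ (1/c) · κ_1(y,z)(A). Then for every measurable set C ⊆ X × Z, |ρ_1({(x,y,z) : (x,z) ∈ C}) − ρ_2({(x,y,z) : (x,z) ∈ C})| ≤ 1 − c. -/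
open MeasureTheory ProbabilityTheory

private lemma hint_aux {W : Type*} [MeasurableSpace W] (μ : Measure W) [IsProbabilityMeasure μ]
    (f : W → ℝ) (hf : Measurable f) (hb : ∀ w, 0 ≤ f w ∧ f w ≤ 1) : Integrable f μ := by
  refine (integrable_const (1 : ℝ)).mono' hf.aestronglyMeasurable ?_
  exact ae_of_all _ fun w => by rw [Real.norm_eq_abs, abs_of_nonneg (hb w).1]; exact (hb w).2

/-- Lemma 3.2 (the conditioning/coupling lemma): perfect coupling in the common
factor `ν` together with uniform `c`-comparability of the conditional
distributions `κⱼ(y,z)` of `x` implies that the joint `(x,z)`-marginals of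
`ρⱼ = κⱼ ⊗ (μⱼ × ν)` differ in total variation by at most `1 - c`. -/
theorem coupling_lemma
    {X Y Z : Type*} [MeasurableSpace X] [MeasurableSpace Y] [MeasurableSpace Z]
    (ν : Measure Z) [IsProbabilityMeasure ν]
    (μ₁ μ₂ : Measure Y) [IsProbabilityMeasure μ₁] [IsProbabilityMeasure μ₂]
    (κ₁ κ₂ : Kernel (Y × Z) X) [IsMarkovKernel κ₁] [IsMarkovKernel κ₂]
    (c : ℝ) (hc0 : 0 < c) (hc1 : c ≤ 1)
    (hcomp : ∀ (y y' : Y) (z : Z) (A : Set X), MeasurableSet A →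
      c * (κ₁ (y, z) A).toReal ≤ (κ₂ (y', z) A).toReal ∧
      (κ₂ (y', z) A).toReal ≤ (1 / c) * (κ₁ (y, z) A).toReal)
    (C : Set (X × Z)) (hC : MeasurableSet C) :
    |(∫ p, ((κ₁ p) {x | (x, p.2) ∈ C}).toReal ∂(μ₁.prod ν)) -
      (∫ p, ((κ₂ p) {x | (x, p.2) ∈ C}).toReal ∂(μ₂.prod ν))| ≤ 1 - c := by
  -- the section sets are measurable
  have hsec : ∀ z : Z, MeasurableSet {x : X | (x, z) ∈ C} := fun z =>
    hC.preimage measurable_prodMk_right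
  set f₁ : Y × Z → ℝ := fun p => ((κ₁ p) {x | (x, p.2) ∈ C}).toReal with hf₁def
  set f₂ : Y × Z → ℝ := fun p => ((κ₂ p) {x | (x, p.2) ∈ C}).toReal with hf₂def
  -- measurability
  have ht : MeasurableSet {q : (Y × Z) × X | (q.2, q.1.2) ∈ C} :=
    hC.preimage (measurable_snd.prodMk measurable_fst.snd)
  have hm₁ : Measurable f₁ :=
    (Kernel.measurable_kernel_prodMk_left (κ := κ₁) ht).ennreal_toReal
  have hm₂ : Measurable f₂ :=
    (Kernel.measurable_kernel_prodMk_left (κ := κ₂) ht).ennreal_toReal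
  -- bounds
  have hb₁ : ∀ p, 0 ≤ f₁ p ∧ f₁ p ≤ 1 := fun p =>
    ⟨ENNReal.toReal_nonneg, by
      simpa using ENNReal.toReal_mono ENNReal.one_ne_top (prob_le_one (μ := κ₁ p))⟩
  have hb₂ : ∀ p, 0 ≤ f₂ p ∧ f₂ p ≤ 1 := fun p =>
    ⟨ENNReal.toReal_nonneg, by
      simpa using ENNReal.toReal_mono ENNReal.one_ne_top (prob_le_one (μ := κ₂ p))⟩
  -- integrability on any probability measure
  have hif₁ : Integrable f₁ (μ₁.prod ν) := hint_aux _ f₁ hm₁ hb₁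
  have hif₂ : Integrable f₂ (μ₂.prod ν) := hint_aux _ f₂ hm₂ hb₂
  -- sections in y are integrable
  have hintsec₁ : ∀ z (μ : Measure Y) [IsProbabilityMeasure μ],
      Integrable (fun y => f₁ (y, z)) μ := by
    intro z μ _
    exact hint_aux μ (fun y => f₁ (y, z)) (hm₁.comp measurable_prodMk_right)
      fun y => hb₁ (y, z)
  have hintsec₂ : ∀ z (μ : Measure Y) [IsProbabilityMeasure μ],
      Integrable (fun y => f₂ (y, z)) μ := by
    intro z μ _
    exact hint_aux μ (fun y => f₂ (y, z)) (hm₂.comp measurable_prodMk_right)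
      fun y => hb₂ (y, z)
  set a : Z → ℝ := fun z => ∫ y, f₁ (y, z) ∂μ₁ with hadef
  set b : Z → ℝ := fun z => ∫ y, f₂ (y, z) ∂μ₂ with hbdef
  -- Fubini
  have hF₁ : ∫ p, f₁ p ∂(μ₁.prod ν) = ∫ z, a z ∂ν := integral_prod_symm f₁ hif₁
  have hF₂ : ∫ p, f₂ p ∂(μ₂.prod ν) = ∫ z, b z ∂ν := integral_prod_symm f₂ hif₂
  -- bounds on a and b
  have ha_mem : ∀ z, 0 ≤ a z ∧ a z ≤ 1 := by
    intro z
    constructor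
    · exact integral_nonneg fun y => (hb₁ (y, z)).1
    · calc a z ≤ ∫ (_ : Y), (1 : ℝ) ∂μ₁ :=
          integral_mono (hintsec₁ z μ₁) (integrable_const 1) fun y => (hb₁ (y, z)).2
        _ = 1 := by simp
  have hb_mem : ∀ z, 0 ≤ b z ∧ b z ≤ 1 := by
    intro z
    constructor
    · exact integral_nonneg fun y => (hb₂ (y, z)).1
    · calc b z ≤ ∫ (_ : Y), (1 : ℝ) ∂μ₂ :=
          integral_mono (hintsec₂ z μ₂) (integrable_const 1) fun y => (hb₂ (y, z)).2
        _ = 1 := by simp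
  -- comparability of a and b
  have key : ∀ z, c * a z ≤ b z ∧ b z ≤ (1 / c) * a z := by
    intro z
    have hpt : ∀ y', c * a z ≤ f₂ (y', z) ∧ f₂ (y', z) ≤ (1 / c) * a z := by
      intro y'
      constructor
      · calc c * a z = ∫ y, c * f₁ (y, z) ∂μ₁ := (integral_const_mul c _).symm
          _ ≤ ∫ (_ : Y), f₂ (y', z) ∂μ₁ :=
            integral_mono ((hintsec₁ z μ₁).const_mul c) (integrable_const _)
              (fun y => (hcomp y y' z _ (hsec z)).1)
          _ = f₂ (y', z) := by simp
      · calc f₂ (y', z) = ∫ (_ : Y), f₂ (y', z) ∂μ₁ := by simp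
          _ ≤ ∫ y, (1 / c) * f₁ (y, z) ∂μ₁ :=
            integral_mono (integrable_const _) ((hintsec₁ z μ₁).const_mul (1 / c))
              (fun y => (hcomp y y' z _ (hsec z)).2)
          _ = (1 / c) * a z := integral_const_mul _ _
    constructor
    · calc c * a z = ∫ (_ : Y), c * a z ∂μ₂ := by simp
        _ ≤ b z := integral_mono (integrable_const _) (hintsec₂ z μ₂)
            (fun y' => (hpt y').1)
    · calc b z ≤ ∫ (_ : Y), (1 / c) * a z ∂μ₂ :=
          integral_mono (hintsec₂ z μ₂) (integrable_const _) (fun y' => (hpt y').2)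
        _ = (1 / c) * a z := by simp
  -- pointwise bound |a z - b z| ≤ 1 - c
  have hab : ∀ z, |a z - b z| ≤ 1 - c := by
    intro z
    obtain ⟨ha0, ha1⟩ := ha_mem z
    obtain ⟨hb0, hb1⟩ := hb_mem z
    obtain ⟨h1, h2⟩ := key z
    rw [abs_sub_le_iff]
    constructor
    · nlinarith
    · rcases le_or_gt (a z) c with h | h
      · have hcb : c * b z ≤ a z := by
          have := mul_le_mul_of_nonneg_left h2 hc0.le
          calc c * b z ≤ c * (1 / c * a z) := this
            _ = a z := by field_simp
        nlinarith [mul_le_mul_of_nonneg_right h (by linarith : (0:ℝ) ≤ 1 - c)]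
      · nlinarith
  -- integrability of a and b over ν
  have hma : StronglyMeasurable a := hm₁.stronglyMeasurable.integral_prod_left'
  have hmb : StronglyMeasurable b := hm₂.stronglyMeasurable.integral_prod_left'
  have hia : Integrable a ν := hint_aux ν a hma.measurable ha_mem
  have hib : Integrable b ν := hint_aux ν b hmb.measurable hb_mem
  rw [hF₁, hF₂, ← integral_sub hia hib]
  calc |∫ z, (a z - b z) ∂ν| ≤ ∫ z, |a z - b z| ∂ν := by simpa [Real.norm_eq_abs] using norm_integral_le_integral_norm (fun z => a z - b z)
    _ ≤ ∫ (_ : Z), (1 - c) ∂ν := integral_mono (hia.sub hib).abs (integrable_const _)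
        hab
    _ = 1 - c := by simp
end

section
/- For u > 0 define ĥ(u) = 4(e^{−u} − 1 + u) − (e^{−2u} − 1 + 2u). Then the function u ↦ ĥ(u)(1 + 2u)²/u³ is monotone increasing on (0, ∞), and for all u > 0, 2/3 ≤ ĥ(u)(1 + 2u)²/u³ ≤ 8. Equivalently, (2/3) u³/(1 + 2u)² ≤ ĥ(u) ≤ 8 u³/(1 + 2u)². -/
/-!
Since `ĥ' = 2 (1 - e^{-u})²`, the derivative of `ĥ(u) (1 + 2u)² / u³` has the sign of
`2u (1 + 2u) (1 - e^{-u})² - (3 + 2u) ĥ(u)`. In `y = e^{-u}` this is a quadratic which is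
decreasing on `[0, 1]`, and `y ≤ 1 / P(u)` with `P` the cubic Taylor polynomial of `e^u`; at
`y = 1 / P(u)` it is `P(u)⁻²` times a polynomial with nonnegative coefficients. The ratio tends
to `2/3` at `0⁺`, as `ĥ(u) = 2u³/3 + O(u⁴)`, and to `8` at `∞`, as `ĥ(u) ~ 2u`; monotonicity
turns these limits into the two bounds.
-/

open Real Set Filter Topology

theorem MonotoneOn.le_of_tendsto_nhdsGT {α β : Type*} [LinearOrder α] [TopologicalSpace α]
    [OrderTopology α] [DenselyOrdered α] [Preorder β] [TopologicalSpace β]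
    [OrderClosedTopology β] {f : α → β} {a x : α} {l : β} (hf : MonotoneOn f (Ioi a))
    (hl : Tendsto f (𝓝[>] a) (𝓝 l)) (hx : a < x) :
    l ≤ f x :=
  have := nhdsGT_neBot_of_exists_gt ⟨x, hx⟩
  le_of_tendsto hl <| mem_of_superset (Ioo_mem_nhdsGT hx) fun _ ht ↦
    hf ht.1 (mem_Ioi.2 hx) ht.2.le

theorem MonotoneOn.le_of_tendsto_atTop {α β : Type*} [Preorder α] [IsDirectedOrder α]
    [Preorder β] [TopologicalSpace β] [OrderClosedTopology β] {f : α → β} {a x : α} {m : β}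
    (hf : MonotoneOn f (Ioi a)) (hm : Tendsto f atTop (𝓝 m)) (hx : a < x) :
    f x ≤ m :=
  have : Nonempty α := ⟨x⟩
  ge_of_tendsto hm <| mem_of_superset (Ici_mem_atTop x) fun _ ht ↦
    hf hx (hx.trans_le ht) ht

noncomputable def positionVariance (u : ℝ) : ℝ :=
  4 * (exp (-u) - 1 + u) - (exp (-2 * u) - 1 + 2 * u)

noncomputable def positionVarianceRatio (u : ℝ) : ℝ :=
  positionVariance u * (1 + 2 * u) ^ 2 / u ^ 3

theorem positionVariance_eq (u : ℝ) :
    positionVariance u = 2 * u - 3 + 4 * exp (-u) - exp (-u) ^ 2 := by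
  rw [positionVariance, ← exp_nat_mul]
  ring_nf

theorem hasDerivAt_positionVariance (u : ℝ) :
    HasDerivAt positionVariance (2 * (1 - exp (-u)) ^ 2) u := by
  have hexp := (hasDerivAt_neg u).exp
  rw [show positionVariance = _ from funext positionVariance_eq]
  refine ((((hasDerivAt_id u).const_mul 2).sub_const 3).fun_add
    (hexp.const_mul 4)).fun_sub (hexp.pow 2) |>.congr_deriv ?_
  norm_num
  ring

theorem hasDerivAt_positionVarianceRatio {u : ℝ} (hu : u ≠ 0) :
    HasDerivAt positionVarianceRatio
      ((1 + 2 * u) / u ^ 4 * (2 * u * (1 + 2 * u) * (1 - exp (-u)) ^ 2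
        - (3 + 2 * u) * positionVariance u)) u := by
  refine ((hasDerivAt_positionVariance u).mul
    (((hasDerivAt_id u).const_mul 2).const_add 1 |>.pow 2))
    |>.div (hasDerivAt_pow 3 u) (pow_ne_zero 3 hu) |>.congr_deriv ?_
  simp only [Pi.mul_apply, Pi.pow_apply, id]
  field_simp
  ring

theorem exp_neg_mul_cubic_le_one {u : ℝ} (hu : 0 ≤ u) :
    exp (-u) * (1 + u + u ^ 2 / 2 + u ^ 3 / 6) ≤ 1 := by
  have h := sum_le_exp_of_nonneg hu 4
  norm_num [Finset.sum_range_succ, Nat.factorial] at h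
  rw [exp_neg, inv_mul_le_one₀ (exp_pos u)]
  linarith

theorem quadratic_nonneg_of_mul_cubic_le_one {u y : ℝ} (hu : 0 ≤ u)
    (hyP : y * (1 + u + u ^ 2 / 2 + u ^ 3 / 6) ≤ 1) :
    0 ≤ 9 + 2 * u - (12 + 12 * u + 8 * u ^ 2) * y + (3 + 4 * u + 4 * u ^ 2) * y ^ 2 := by
  obtain ⟨P, hP⟩ : ∃ P, P = 1 + u + u ^ 2 / 2 + u ^ 3 / 6 := ⟨_, rfl⟩
  obtain ⟨A, hA⟩ : ∃ A, A = 12 + 12 * u + 8 * u ^ 2 := ⟨_, rfl⟩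
  obtain ⟨B, hB⟩ : ∃ B, B = 3 + 4 * u + 4 * u ^ 2 := ⟨_, rfl⟩
  rw [← hP] at hyP
  rw [← hA, ← hB]
  have hP1 : 1 ≤ P := by rw [hP]; nlinarith [pow_nonneg hu 2, pow_nonneg hu 3]
  have hB0 : 0 ≤ B := by rw [hB]; positivity
  have hAB : 2 * B ≤ A := by rw [hA, hB]; nlinarith
  have hQ1 : 0 ≤ (9 + 2 * u) * P ^ 2 - A * P + B := by
    rw [hP, hA, hB]; ring_nf; positivity
  have hQt : 0 ≤ (1 - y * P) * (A * P - B * (1 + y * P)) :=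
    mul_nonneg (by linarith) (by nlinarith [mul_nonneg hB0 (sub_nonneg.2 hyP)])
  -- `P²` times the quadratic, expanded around `y P = 1`
  have hG : P ^ 2 * (9 + 2 * u - A * y + B * y ^ 2)
      = ((9 + 2 * u) * P ^ 2 - A * P + B) + (1 - y * P) * (A * P - B * (1 + y * P)) := by
    ring
  exact nonneg_of_mul_nonneg_right (hG ▸ add_nonneg hQ1 hQt) (by positivity)

theorem positionVariance_mul_le {u : ℝ} (hu : 0 ≤ u) :
    (3 + 2 * u) * positionVariance u ≤ 2 * u * (1 + 2 * u) * (1 - exp (-u)) ^ 2 := by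
  have h := quadratic_nonneg_of_mul_cubic_le_one hu (exp_neg_mul_cubic_le_one hu)
  rw [positionVariance_eq]
  linarith

theorem monotoneOn_positionVarianceRatio : MonotoneOn positionVarianceRatio (Ioi 0) := by
  refine monotoneOn_of_hasDerivWithinAt_nonneg (convex_Ioi 0)
    (fun u hu ↦ (hasDerivAt_positionVarianceRatio (ne_of_gt hu)).continuousAt.continuousWithinAt)
    (fun u hu ↦
      (hasDerivAt_positionVarianceRatio (ne_of_gt (interior_subset hu))).hasDerivWithinAt)
    fun u hu ↦ ?_
  rw [interior_Ioi, mem_Ioi] at hu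
  exact mul_nonneg (by positivity) (sub_nonneg.2 (positionVariance_mul_le hu.le))

theorem abs_positionVariance_sub_le {u : ℝ} (hu₀ : 0 ≤ u) (hu : u ≤ 1 / 2) :
    |positionVariance u - 2 / 3 * u ^ 3| ≤ 2 * u ^ 4 := by
  have h₁ := exp_bound (x := -u) (n := 4)
    (by rw [abs_neg, abs_of_nonneg hu₀]; linarith) (by norm_num)
  have h₂ := exp_bound (x := -(2 * u)) (n := 4)
    (by rw [abs_neg, abs_of_nonneg (by linarith)]; linarith) (by norm_num)
  norm_num [Finset.sum_range_succ, Nat.factorial, abs_of_nonneg hu₀] at h₁ h₂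
  rw [positionVariance, neg_mul, abs_le]
  rw [abs_le] at h₁ h₂
  constructor <;> nlinarith [pow_nonneg hu₀ 4]

theorem tendsto_positionVarianceRatio_nhdsGT_zero :
    Tendsto positionVarianceRatio (𝓝[>] 0) (𝓝 (2 / 3)) := by
  have hcube : Tendsto (fun u ↦ positionVariance u / u ^ 3) (𝓝[>] 0) (𝓝 (2 / 3)) := by
    rw [← tendsto_sub_nhds_zero_iff]
    refine squeeze_zero_norm' (a := fun u ↦ 2 * u) ?_ (tendsto_nhdsWithin_of_tendsto_nhds
      ((continuous_const_mul 2).tendsto' 0 0 (mul_zero 2)))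
    filter_upwards [Ioo_mem_nhdsGT (by norm_num : (0 : ℝ) < 1 / 2)] with u ⟨hu₀, hu⟩
    rw [Real.norm_eq_abs, show positionVariance u / u ^ 3 - 2 / 3
      = (positionVariance u - 2 / 3 * u ^ 3) / u ^ 3 by field_simp, abs_div,
      abs_of_pos (pow_pos hu₀ 3), div_le_iff₀ (pow_pos hu₀ 3)]
    calc _ ≤ 2 * u ^ 4 := abs_positionVariance_sub_le hu₀.le hu.le
      _ = _ := by ring
  have hsq : Tendsto (fun u : ℝ ↦ (1 + 2 * u) ^ 2) (𝓝[>] 0) (𝓝 1) :=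
    tendsto_nhdsWithin_of_tendsto_nhds
      ((by fun_prop : Continuous fun u : ℝ ↦ (1 + 2 * u) ^ 2).tendsto' 0 1 (by norm_num))
  have h := hcube.mul hsq
  rw [mul_one] at h
  refine h.congr fun u ↦ ?_
  rw [positionVarianceRatio]
  ring

theorem tendsto_positionVarianceRatio_atTop :
    Tendsto positionVarianceRatio atTop (𝓝 8) := by
  have hexp : Tendsto (fun u ↦ exp (-u)) atTop (𝓝 0) := tendsto_exp_neg_atTop_nhds_zero
  have hlin := (tendsto_const_nhds (x := (2 : ℝ))).add
    ((((hexp.const_mul 4).sub (hexp.pow 2)).sub_const 3).mul tendsto_inv_atTop_zero)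
  have hquad := (tendsto_inv_atTop_zero.add_const (2 : ℝ)).pow 2
  have h := hlin.mul hquad
  norm_num at h
  refine h.congr' ?_
  filter_upwards [eventually_gt_atTop 0] with u hu
  rw [positionVarianceRatio, positionVariance_eq]
  field_simp
  ring

/-- The estimate leading to inequality (3.34): with
`ĥ(u) = 4(e^{-u}-1+u) - (e^{-2u}-1+2u)`, the function `u ↦ ĥ(u)(1+2u)²/u³`
is monotone increasing on `(0,∞)` and takes values in `[2/3, 8]`; equivalently,
`(2/3) u³/(1+2u)² ≤ ĥ(u) ≤ 8 u³/(1+2u)²` for all `u > 0`. -/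
theorem position_variance_bounds
    (h : ℝ → ℝ)
    (hh : ∀ u : ℝ, h u =
      4 * (Real.exp (-u) - 1 + u) - (Real.exp (-2 * u) - 1 + 2 * u)) :
    MonotoneOn (fun u : ℝ => h u * (1 + 2 * u) ^ 2 / u ^ 3) (Set.Ioi 0) ∧
    (∀ u : ℝ, 0 < u →
      2 / 3 ≤ h u * (1 + 2 * u) ^ 2 / u ^ 3 ∧
      h u * (1 + 2 * u) ^ 2 / u ^ 3 ≤ 8) ∧
    (∀ u : ℝ, 0 < u →
      (2 / 3) * (u ^ 3 / (1 + 2 * u) ^ 2) ≤ h u ∧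
      h u ≤ 8 * (u ^ 3 / (1 + 2 * u) ^ 2)) := by
  obtain rfl : h = positionVariance := funext hh
  have hbounds (u : ℝ) (hu : 0 < u) :
      2 / 3 ≤ positionVarianceRatio u ∧ positionVarianceRatio u ≤ 8 :=
    ⟨monotoneOn_positionVarianceRatio.le_of_tendsto_nhdsGT
        tendsto_positionVarianceRatio_nhdsGT_zero hu,
      monotoneOn_positionVarianceRatio.le_of_tendsto_atTop tendsto_positionVarianceRatio_atTop hu⟩
  refine ⟨monotoneOn_positionVarianceRatio, hbounds, fun u hu ↦ ?_⟩
  obtain ⟨hlower, hupper⟩ := hbounds u hu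
  rw [positionVarianceRatio, le_div_iff₀ (by positivity)] at hlower
  rw [positionVarianceRatio, div_le_iff₀ (by positivity)] at hupper
  rw [← mul_div_assoc, ← mul_div_assoc, div_le_iff₀ (by positivity),
    le_div_iff₀ (by positivity)]
  exact ⟨by linarith, by linarith⟩
end

section
/- For u > 0 define ĥ(u) = 4(e^{−u} − 1 + u) − (e^{−2u} − 1 + 2u) and ρ̂(u) = (1 − e^{−u})² / √( (1 − e^{−2u}) ĥ(u) ). Then: (i) lim_{u → 0+} ρ̂(u) = √3/2; (ii) the function u ↦ ρ̂(u) √(1 + u/5) is monotone decreasing on (0, ∞); and (iii) lim_{u → ∞} ρ̂(u) √(1 + u/5) = 1/√10. -/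
/-!
Write `x = e^{-u}`. Since `1 - e^{-2u} = (1 - x)(1 + x)`, for `u > 0` we have
`ρ̂(u)² = (1 - x)³ / ((1 + x) ĥ(u))`. Taylor expansion of `exp` gives `1 - x ~ u` and
`ĥ(u) ~ 2u³/3` as `u → 0`, so `ρ̂² → 1 / (2 · 2/3) = 3/4`; as `u → ∞`, `ĥ(u) ~ 2u`, so
`ρ̂(u)² (1 + u/5) → (1/5) / 2 = 1/10`.

The derivative of `ρ̂(u)² (1 + u/5)` is `-(1 - x)² e^{-4u} G(u) / (5 ((1 + x) ĥ(u))²)`, where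
`G` is a combination of `e^{ku}`, `0 ≤ k ≤ 4`, with quadratic polynomial coefficients.
`G` and its first three derivatives vanish at `0`, and `G⁗ ≥ 0` on `[0, ∞)` by the lower bound
`e^u ≥ 1 + u + u²/2 + u³/6`; hence `G ≥ 0` there and `ρ̂(u)² (1 + u/5)` is antitone.
-/

open Filter Real Set Asymptotics Topology

theorem nonneg_of_hasDerivAt_nonneg {f f' : ℝ → ℝ} (hf : ∀ u, HasDerivAt f (f' u) u)
    (h₀ : 0 ≤ f 0) (hf' : ∀ u, 0 ≤ u → 0 ≤ f' u) {u : ℝ} (hu : 0 ≤ u) : 0 ≤ f u :=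
  have hmono : MonotoneOn f (Ici 0) :=
    monotoneOn_of_hasDerivWithinAt_nonneg (convex_Ici 0)
      (fun x _ ↦ (hf x).continuousAt.continuousWithinAt)
      (fun x _ ↦ (hf x).hasDerivWithinAt) (fun x hx ↦ hf' x (interior_subset hx))
  h₀.trans (hmono self_mem_Ici hu hu)

theorem nonneg_of_iterated_hasDerivAt {g : ℕ → ℝ → ℝ} {n : ℕ}
    (hg : ∀ j u, HasDerivAt (g j) (g (j + 1) u) u) (h₀ : ∀ j < n, 0 ≤ g j 0)
    (hn : ∀ u, 0 ≤ u → 0 ≤ g n u) {u : ℝ} (hu : 0 ≤ u) : 0 ≤ g 0 u := by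
  induction n generalizing g u with
  | zero => exact hn u hu
  | succ n ih =>
    exact nonneg_of_hasDerivAt_nonneg (hg 0) (h₀ 0 n.succ_pos)
      (fun v hv ↦ ih (g := fun j ↦ g (j + 1)) (fun j ↦ hg (j + 1))
        (fun j hj ↦ h₀ (j + 1) (by omega)) hn hv) hu

noncomputable def quadExp (k : ℝ) (q : ℝ × ℝ × ℝ) (u : ℝ) : ℝ :=
  (q.1 + q.2.1 * u + q.2.2 * u ^ 2) * exp (k * u)

def quadExpDeriv (k : ℝ) (q : ℝ × ℝ × ℝ) : ℝ × ℝ × ℝ :=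
  (q.2.1 + k * q.1, 2 * q.2.2 + k * q.2.1, k * q.2.2)

theorem hasDerivAt_quadExp (k : ℝ) (q : ℝ × ℝ × ℝ) (u : ℝ) :
    HasDerivAt (quadExp k q) (quadExp k (quadExpDeriv k q) u) u := by
  obtain ⟨a, b, c⟩ := q
  have hpoly : HasDerivAt (fun u ↦ a + b * u + c * u ^ 2) (b * 1 + c * (2 * u)) u := by
    simpa using (((hasDerivAt_id' u).const_mul b).const_add a).fun_add
      ((hasDerivAt_pow 2 u).const_mul c)
  have hexp : HasDerivAt (fun u ↦ exp (k * u)) (exp (k * u) * (k * 1)) u :=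
    ((hasDerivAt_id' u).const_mul k).exp
  exact (hpoly.fun_mul hexp).congr_deriv (by simp only [quadExp, quadExpDeriv]; ring)

theorem quadExp_zero (k : ℝ) (q : ℝ × ℝ × ℝ) : quadExp k q 0 = q.1 := by
  simp [quadExp]

-- `no_index` lets `simp` rewrite with this lemma at numerals.
theorem exp_ofNat_mul (n : ℕ) [n.AtLeastTwo] (u : ℝ) :
    exp ((no_index (OfNat.ofNat n)) * u) = exp u ^ (OfNat.ofNat n : ℕ) := by
  rw [← exp_nat_mul, Nat.cast_ofNat]

def derivNumerCoeff : ℕ → ℝ × ℝ × ℝ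
  | 0 => (-1, 0, 0)
  | 1 => (4, 0, 0)
  | 2 => (-52, -28, -4)
  | 3 => (36, -32, -8)
  | _ => (13, 0, 0)

/-- `derivNumer 0` is the function `G` of the proof idea, `derivNumerCoeff k` holding the
coefficients of `e^{ku}`; `derivNumer j` is its `j`-th derivative. -/
noncomputable def derivNumer (j : ℕ) (u : ℝ) : ℝ :=
  ∑ k ∈ Finset.range 5, quadExp k ((quadExpDeriv k)^[j] (derivNumerCoeff k)) u

theorem hasDerivAt_derivNumer (j : ℕ) (u : ℝ) :
    HasDerivAt (derivNumer j) (derivNumer (j + 1) u) u := by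
  simp only [derivNumer, Function.iterate_succ_apply']
  exact HasDerivAt.fun_sum fun k _ ↦ hasDerivAt_quadExp _ _ u

theorem derivNumer_zero_of_lt_four {j : ℕ} (hj : j < 4) : derivNumer j 0 = 0 := by
  interval_cases j <;>
    norm_num [derivNumer, quadExp_zero, Finset.sum_range_succ, derivNumerCoeff, quadExpDeriv]

theorem derivNumer_four_eq (u : ℝ) : derivNumer 4 u = 3328 * exp u ^ 4
    - (1404 + 4320 * u + 648 * u ^ 2) * exp u ^ 3 - (1920 + 704 * u + 64 * u ^ 2) * exp u ^ 2
    + 4 * exp u := by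
  norm_num [derivNumer, quadExp, Finset.sum_range_succ, derivNumerCoeff, quadExpDeriv,
    exp_ofNat_mul]
  ring

theorem derivNumer_four_nonneg {u : ℝ} (hu : 0 ≤ u) : 0 ≤ derivNumer 4 u := by
  have htaylor : 1 + u + u ^ 2 / 2 + u ^ 3 / 6 ≤ exp u := by
    simpa [Finset.sum_range_succ, Nat.factorial] using sum_le_exp_of_nonneg hu 4
  rw [derivNumer_four_eq]
  set t := exp u
  have ht : 0 < t := exp_pos u
  -- `derivNumer 4 u = t² q(t) + 4t`, with a quadratic `q` that is nonnegative at the Taylor bound.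
  have hquad : 0 ≤ 3328 * t ^ 2 - (1404 + 4320 * u + 648 * u ^ 2) * t
      - (1920 + 704 * u + 64 * u ^ 2) := by
    nlinarith [sq_nonneg u, pow_nonneg hu 3, pow_nonneg hu 4, pow_nonneg hu 5, pow_nonneg hu 6,
      mul_nonneg hu hu, sq_nonneg (t - (1 + u + u ^ 2 / 2 + u ^ 3 / 6))]
  nlinarith [mul_nonneg (sq_nonneg t) hquad]

theorem derivNumer_nonneg {u : ℝ} (hu : 0 ≤ u) : 0 ≤ derivNumer 0 u :=
  nonneg_of_iterated_hasDerivAt hasDerivAt_derivNumer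
    (fun _ hj ↦ (derivNumer_zero_of_lt_four hj).ge) (fun _ ↦ derivNumer_four_nonneg) hu

theorem exp_neg_mul_derivNumer_zero (u : ℝ) :
    exp (-4 * u) * derivNumer 0 u = 13 + (36 - 32 * u - 8 * u ^ 2) * exp (-u)
      - (52 + 28 * u + 4 * u ^ 2) * exp (-u) ^ 2 + 4 * exp (-u) ^ 3 - exp (-u) ^ 4 := by
  norm_num [derivNumer, quadExp, Finset.sum_range_succ, derivNumerCoeff, exp_ofNat_mul, exp_neg]
  field_simp
  ring

noncomputable def hHat (u : ℝ) : ℝ := 4 * (exp (-u) - 1 + u) - (exp (-2 * u) - 1 + 2 * u)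

theorem exp_neg_two_mul (u : ℝ) : exp (-2 * u) = exp (-u) ^ 2 := by
  rw [← exp_nat_mul]; ring_nf

theorem hasDerivAt_hHat (u : ℝ) : HasDerivAt hHat (2 * (1 - exp (-u)) ^ 2) u := by
  have h1 : HasDerivAt (fun v ↦ exp (-v)) (exp (-u) * -1) u := (hasDerivAt_neg' u).exp
  have h2 : HasDerivAt (fun v ↦ exp (-2 * v)) (exp (-2 * u) * (-2 * 1)) u :=
    ((hasDerivAt_id' u).const_mul (-2)).exp
  have := ((((h1.sub_const 1).add (hasDerivAt_id' u)).const_mul 4).sub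
    (((h2.sub_const 1).add ((hasDerivAt_id' u).const_mul 2))))
  exact this.congr_deriv (by rw [exp_neg_two_mul]; ring)

theorem hHat_pos {u : ℝ} (hu : 0 < u) : 0 < hHat u := by
  have hmono : StrictMonoOn hHat (Ici 0) :=
    strictMonoOn_of_hasDerivWithinAt_pos (convex_Ici 0)
      (fun x _ ↦ (hasDerivAt_hHat x).continuousAt.continuousWithinAt)
      (fun x _ ↦ (hasDerivAt_hHat x).hasDerivWithinAt)
      (fun x hx ↦ by
        rw [interior_Ici] at hx
        have : exp (-x) < 1 := exp_lt_one_iff.2 (neg_lt_zero.2 hx)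
        nlinarith)
  simpa [hHat] using hmono self_mem_Ici hu.le hu

/-- `ρ̂(u)²` for `u > 0`, with the factor `1 - e^{-u}` of `1 - e^{-2u}` cancelled. -/
noncomputable def corrSq (u : ℝ) : ℝ := (1 - exp (-u)) ^ 3 / ((1 + exp (-u)) * hHat u)

theorem hasDerivAt_corrSq_mul {u : ℝ} (hu : 0 < u) :
    HasDerivAt (fun v ↦ corrSq v * (1 + v / 5))
      (-((1 - exp (-u)) ^ 2 * (exp (-4 * u) * derivNumer 0 u)
        / (5 * ((1 + exp (-u)) * hHat u) ^ 2))) u := by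
  have hx : HasDerivAt (fun v ↦ exp (-v)) (-exp (-u)) u := by
    simpa using (hasDerivAt_neg' u).exp
  have hN := (hx.const_sub 1).fun_pow 3
  have hD := (hx.const_add 1).fun_mul (hasDerivAt_hHat u)
  have hD0 : (1 + exp (-u)) * hHat u ≠ 0 := by have := hHat_pos hu; positivity
  have hL : HasDerivAt (fun v : ℝ ↦ 1 + v / 5) (1 / 5) u :=
    ((hasDerivAt_id' u).div_const 5).const_add 1
  refine ((hN.fun_div hD hD0).fun_mul hL).congr_deriv ?_
  have hH : hHat u = 2 * u - 3 + 4 * exp (-u) - exp (-u) ^ 2 := by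
    rw [hHat, exp_neg_two_mul]; ring
  rw [exp_neg_mul_derivNumer_zero, hH]
  rw [hH] at hD0
  field_simp
  ring

theorem corrSq_pos {u : ℝ} (hu : 0 < u) : 0 < corrSq u := by
  have hx : exp (-u) < 1 := exp_lt_one_iff.2 (neg_lt_zero.2 hu)
  exact div_pos (pow_pos (sub_pos.2 hx) 3) (mul_pos (by positivity) (hHat_pos hu))

theorem antitoneOn_corrSq_mul : AntitoneOn (fun u ↦ corrSq u * (1 + u / 5)) (Ioi 0) :=
  antitoneOn_of_hasDerivWithinAt_nonpos (convex_Ioi 0)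
    (fun u hu ↦ (hasDerivAt_corrSq_mul hu).continuousAt.continuousWithinAt)
    (fun u hu ↦ (hasDerivAt_corrSq_mul (interior_subset hu)).hasDerivWithinAt)
    (fun u hu ↦ neg_nonpos.2 (div_nonneg (mul_nonneg (sq_nonneg _)
      (mul_nonneg (exp_pos _).le (derivNumer_nonneg (interior_subset hu).le))) (by positivity)))

theorem sq_div_sqrt_eq_sqrt_corrSq {u : ℝ} (hu : 0 < u) :
    (1 - exp (-u)) ^ 2 / √((1 - exp (-2 * u)) * hHat u) = √(corrSq u) := by
  have hx : exp (-u) < 1 := exp_lt_one_iff.2 (neg_lt_zero.2 hu)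
  have hH := hHat_pos hu
  have hfactor : 1 - exp (-2 * u) = (1 - exp (-u)) * (1 + exp (-u)) := by
    rw [exp_neg_two_mul]; ring
  rw [← sqrt_sq (sq_nonneg (1 - exp (-u))), ← sqrt_div' _ (by rw [hfactor]; positivity), corrSq,
    hfactor]
  congr 1
  have : 1 - exp (-u) ≠ 0 := by linarith
  field_simp

theorem exp_mul_sub_taylor_isLittleO (c : ℝ) (n : ℕ) :
    (fun u ↦ exp (c * u) - ∑ i ∈ Finset.range (n + 1), (c * u) ^ i / i.factorial) =o[𝓝 0]
      (· ^ n) := by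
  have hc : Tendsto (fun u ↦ c * u) (𝓝 0) (𝓝 0) := by
    simpa using (continuous_const_mul c).tendsto 0
  refine ((exp_sub_sum_range_succ_isLittleO_pow n).comp_tendsto hc).trans_isBigO ?_
  simp only [Function.comp_def, mul_pow]
  exact (isBigO_refl _ _).const_mul_left (c ^ n)

theorem one_sub_exp_neg_isEquivalent : (fun u ↦ 1 - exp (-u)) ~[𝓝 0] id := by
  refine IsLittleO.isEquivalent ?_
  have := (exp_mul_sub_taylor_isLittleO (-1) 1).neg_left
  simp only [pow_one] at this
  refine this.congr (fun u ↦ ?_) (fun _ ↦ rfl)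
  simp only [Finset.sum_range_succ, Finset.sum_range_zero, Nat.factorial, Pi.sub_apply, id]
  push_cast
  ring_nf

theorem hHat_isEquivalent : hHat ~[𝓝 0] fun u ↦ 2 / 3 * u ^ 3 := by
  refine IsLittleO.isEquivalent ?_
  have := ((exp_mul_sub_taylor_isLittleO (-1) 3).const_mul_left 4).sub
    (exp_mul_sub_taylor_isLittleO (-2) 3)
  refine (this.congr (fun u ↦ ?_) (fun _ ↦ rfl)).trans_isBigO
    (isBigO_self_const_mul (by norm_num) _ _)
  simp only [hHat, Finset.sum_range_succ, Finset.sum_range_zero, Nat.factorial, Pi.sub_apply]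
  push_cast
  ring_nf

theorem tendsto_corrSq_nhdsGT : Tendsto corrSq (𝓝[>] 0) (𝓝 (3 / 4)) := by
  have hden : (fun u ↦ 1 + exp (-u)) ~[𝓝 0] fun _ ↦ 2 :=
    (isEquivalent_const_iff_tendsto two_ne_zero).2
      ((by fun_prop : Continuous fun u ↦ 1 + exp (-u)).tendsto' 0 2 (by norm_num))
  have h := ((one_sub_exp_neg_isEquivalent.pow 3).div (hden.mul hHat_isEquivalent)).mono
    (nhdsWithin_le_nhds (s := Ioi 0))
  refine h.symm.tendsto_nhds (tendsto_const_nhds.congr' ?_)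
  filter_upwards [self_mem_nhdsWithin] with u (hu : 0 < u)
  simp only [Pi.div_apply, Pi.pow_apply, Pi.mul_apply, id]
  field_simp
  ring

theorem tendsto_hHat_div_atTop : Tendsto (fun u ↦ hHat u / u) atTop (𝓝 2) := by
  have hx := tendsto_exp_neg_atTop_nhds_zero
  have h : Tendsto (fun u ↦ 2 + (-3 + 4 * exp (-u) - exp (-u) ^ 2) * u⁻¹) atTop
      (𝓝 (2 + (-3 + 4 * 0 - 0 ^ 2) * 0)) := tendsto_const_nhds.add
    (((tendsto_const_nhds.add (hx.const_mul 4)).sub (hx.pow 2)).mul tendsto_inv_atTop_zero)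
  rw [show (2 : ℝ) = 2 + (-3 + 4 * 0 - 0 ^ 2) * 0 by norm_num]
  refine h.congr' ?_
  filter_upwards [eventually_gt_atTop 0] with u hu
  rw [hHat, exp_neg_two_mul]
  field_simp
  ring

theorem tendsto_corrSq_mul_atTop :
    Tendsto (fun u ↦ corrSq u * (1 + u / 5)) atTop (𝓝 (1 / 10)) := by
  have hx := tendsto_exp_neg_atTop_nhds_zero
  have h : Tendsto
      (fun u ↦ (1 - exp (-u)) ^ 3 * (u⁻¹ + 1 / 5) / ((1 + exp (-u)) * (hHat u / u))) atTop
      (𝓝 ((1 - 0) ^ 3 * (0 + 1 / 5) / ((1 + 0) * 2))) :=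
    (((tendsto_const_nhds.sub hx).pow 3).mul (tendsto_inv_atTop_zero.add tendsto_const_nhds)).div
      ((tendsto_const_nhds.add hx).mul tendsto_hHat_div_atTop) (by norm_num)
  rw [show (1 / 10 : ℝ) = (1 - 0) ^ 3 * (0 + 1 / 5) / ((1 + 0) * 2) by norm_num]
  refine h.congr' ?_
  filter_upwards [eventually_gt_atTop 0] with u hu
  have := hHat_pos hu
  rw [corrSq]
  field_simp

/-- The three claims about the asymptotic position–velocity correlation `ρ̂`
stated before inequality (3.32): `ρ̂(u) → √3/2` as `u → 0⁺`,
`u ↦ ρ̂(u)√(1+u/5)` is monotone decreasing on `(0,∞)`, and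
`ρ̂(u)√(1+u/5) → 1/√10` as `u → ∞`. -/
theorem correlation_asymptotics
    (h ρ : ℝ → ℝ)
    (hh : ∀ u : ℝ, h u =
      4 * (Real.exp (-u) - 1 + u) - (Real.exp (-2 * u) - 1 + 2 * u))
    (hρ : ∀ u : ℝ, ρ u =
      (1 - Real.exp (-u)) ^ 2 / Real.sqrt ((1 - Real.exp (-2 * u)) * h u)) :
    Tendsto ρ (nhdsWithin 0 (Set.Ioi 0)) (nhds (Real.sqrt 3 / 2)) ∧
    AntitoneOn (fun u : ℝ => ρ u * Real.sqrt (1 + u / 5)) (Set.Ioi 0) ∧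
    Tendsto (fun u : ℝ => ρ u * Real.sqrt (1 + u / 5)) atTop
      (nhds (1 / Real.sqrt 10)) := by
  obtain rfl : h = hHat := funext hh
  have hρ_eq : ∀ u > 0, ρ u = √(corrSq u) := fun u hu ↦
    (hρ u).trans (sq_div_sqrt_eq_sqrt_corrSq hu)
  have hscaled : ∀ u > 0, ρ u * √(1 + u / 5) = √(corrSq u * (1 + u / 5)) := fun u hu ↦ by
    rw [hρ_eq u hu, sqrt_mul (corrSq_pos hu).le]
  refine ⟨?_, fun a ha b hb hab ↦ ?_, ?_⟩
  · rw [show √3 / 2 = √(3 / 4) by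
      rw [sqrt_div' _ (by norm_num), show (4 : ℝ) = 2 ^ 2 by norm_num, sqrt_sq zero_le_two]]
    exact tendsto_corrSq_nhdsGT.sqrt.congr'
      (eventually_nhdsWithin_of_forall fun u hu ↦ (hρ_eq u hu).symm)
  · simp only [hscaled a ha, hscaled b hb]
    exact sqrt_le_sqrt (antitoneOn_corrSq_mul ha hb hab)
  · rw [one_div, ← sqrt_inv, ← one_div]
    exact tendsto_corrSq_mul_atTop.sqrt.congr'
      ((eventually_gt_atTop 0).mono fun u hu ↦ (hscaled u hu).symm)
end
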